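/- arXiv:2304.14315 — 2 statements merged into one kernel-verified Lean document; each statement's English description precedes it below -/
import Mathlib

section
/- Let n ≥ 0 and let G be a group with subgroups H ≤ K such that both H and K are virtually ℤ^n. Then H has finite index in K; in particular H and K are commensurable. (This is the key point in verifying that commensurability is a strong equivalence relation on F_{n+1} − F_n: any two nested members of F_{n+1} − F_n are commensurable.) -/
/-- A group `G` is *virtually `ℤ^r`* if it contains a finite-index subgroup
isomorphic to the free abelian group `ℤ^r` (here `Fin r → ℤ`). -/
def IsVirtuallyZpow (G : Type*) [Group G] (r : ℕ) : Prop :=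
  ∃ H : Subgroup G, H.FiniteIndex ∧ Nonempty (H ≃* Multiplicative (Fin r → ℤ))

/-!
A subgroup of a free abelian group of finite rank has finite index exactly when it has full
rank (Smith normal form), and rank is an isomorphism invariant. So if `B ≤ K` has finite index
and `A ≤ K` is another copy of `ℤ^n`, then `A ⊓ B` has finite index in `A`, hence rank `n`,
hence finite index in `B`, and therefore `A` has finite index in `K`. Applied to a copy of `ℤ^n`
of finite index in `H`, this shows that `H` has finite index in `K`.
-/

open Module

theorem AddSubgroup.finiteIndex_of_addEquiv {M N : Type*} [AddCommGroup M] [AddCommGroup N]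
    [Free ℤ M] [Module.Finite ℤ M] [Free ℤ N] [Module.Finite ℤ N]
    (hMN : finrank ℤ M = finrank ℤ N) {P : AddSubgroup M} {Q : AddSubgroup N} [Q.FiniteIndex]
    (e : P ≃+ Q) : P.FiniteIndex := by
  have hP : finrank ℤ P = finrank ℤ M :=
    calc finrank ℤ P = finrank ℤ Q := e.toIntLinearEquiv.finrank_eq
      _ = finrank ℤ M := by rw [finrank_eq_of_finiteIndex Q, hMN]
  have := (Submodule.finiteQuotient_iff P.toIntSubmodule).mpr hP
  exact @finiteIndex_of_finite_quotient _ _ P this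

namespace Subgroup

variable {G : Type*} [Group G] {n : ℕ}

theorem finiteIndex_map_equiv_iff {G' : Type*} [Group G'] (e : G ≃* G') (H : Subgroup G) :
    (H.map (e : G →* G')).FiniteIndex ↔ H.FiniteIndex := by
  rw [finiteIndex_iff, finiteIndex_iff, index_map_equiv]

theorem finiteIndex_of_mulEquiv {M N : Type*} [Group M] [Group N]
    (eM : M ≃* Multiplicative (Fin n → ℤ)) (eN : N ≃* Multiplicative (Fin n → ℤ))
    {P : Subgroup M} {Q : Subgroup N} [Q.FiniteIndex] (e : P ≃* Q) : P.FiniteIndex := by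
  let P' := toAddSubgroup' (P.map (eM : M →* Multiplicative (Fin n → ℤ)))
  let Q' := toAddSubgroup' (Q.map (eN : N →* Multiplicative (Fin n → ℤ)))
  have : Q'.FiniteIndex := ⟨((finiteIndex_map_equiv_iff eN Q).mpr ‹_›).index_ne_zero⟩
  let f := (eM.subgroupMap P).symm.trans (e.trans (eN.subgroupMap Q))
  let e' : P' ≃+ Q' := { f.toEquiv with map_add' := f.map_mul }
  exact (finiteIndex_map_equiv_iff eM P).mp
    ⟨(AddSubgroup.finiteIndex_of_addEquiv rfl e').index_ne_zero⟩

def subgroupOfCommEquiv (H K : Subgroup G) : H.subgroupOf K ≃* K.subgroupOf H where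
  toFun x := ⟨⟨x.1, x.2⟩, x.1.2⟩
  invFun x := ⟨⟨x.1, x.2⟩, x.1.2⟩
  map_mul' _ _ := rfl

theorem finiteIndex_of_mulEquiv_of_finiteIndex {A B : Subgroup G} [B.FiniteIndex]
    (eA : A ≃* Multiplicative (Fin n → ℤ)) (eB : B ≃* Multiplicative (Fin n → ℤ)) :
    A.FiniteIndex := by
  have hAB : A.relIndex B ≠ 0 :=
    (finiteIndex_of_mulEquiv eB eA (subgroupOfCommEquiv A B)).index_ne_zero
  have hB : B.relIndex ⊤ ≠ 0 := by
    rw [relIndex_top_right]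
    exact FiniteIndex.index_ne_zero
  rw [finiteIndex_iff, ← relIndex_top_right]
  exact relIndex_ne_zero_trans hAB hB

end Subgroup

namespace IsVirtuallyZpow

variable {G : Type*} [Group G] {n : ℕ}

theorem of_mulEquiv {G' : Type*} [Group G'] (e : G ≃* G') (h : IsVirtuallyZpow G n) :
    IsVirtuallyZpow G' n := by
  obtain ⟨A, hA, ⟨eA⟩⟩ := h
  exact ⟨A.map (e : G →* G'), (Subgroup.finiteIndex_map_equiv_iff e A).mpr hA,
    ⟨(e.subgroupMap A).symm.trans eA⟩⟩

theorem finiteIndex_of_isVirtuallyZpow (hG : IsVirtuallyZpow G n) {L : Subgroup G}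
    (hL : IsVirtuallyZpow L n) : L.FiniteIndex := by
  obtain ⟨B, hB, ⟨eB⟩⟩ := hG
  obtain ⟨A, -, ⟨eA⟩⟩ := hL
  have : (A.map L.subtype).FiniteIndex :=
    Subgroup.finiteIndex_of_mulEquiv_of_finiteIndex
      ((A.equivMapOfInjective _ L.subtype_injective).symm.trans eA) eB
  exact Subgroup.finiteIndex_of_le (Subgroup.map_subtype_le A)

end IsVirtuallyZpow

/-- If `H ≤ K` are subgroups of `G` that are both virtually `ℤ^n`, then `H` has finite
index in `K`; in particular `H` and `K` are commensurable. -/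
theorem finiteIndex_of_nested_virtuallyZpow (n : ℕ) (G : Type*) [Group G]
    (H K : Subgroup G) (hHK : H ≤ K)
    (hH : IsVirtuallyZpow H n) (hK : IsVirtuallyZpow K n) :
    (H.subgroupOf K).FiniteIndex ∧ Subgroup.Commensurable H K := by
  have hHK' : (H.subgroupOf K).FiniteIndex :=
    hK.finiteIndex_of_isVirtuallyZpow (hH.of_mulEquiv (Subgroup.subgroupOfEquivOfLe hHK).symm)
  refine ⟨hHK', hHK'.index_ne_zero, ?_⟩
  rw [Subgroup.relIndex_eq_one.mpr hHK]
  exact one_ne_zero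
end

section
/- For every finite simple graph Γ, the right-angled Artin group A_Γ is torsion-free: if g ∈ A_Γ with g ≠ 1, then g^k ≠ 1 for every integer k ≥ 1. -/
/-!
Pick a vertex `v` of `Γ` with link `lk v`. Then `A_Γ` embeds into (in fact is) the amalgamated
product of `A_{Γ - v}` and `A_{lk v} × ⟨v⟩` over `A_{lk v}`; the amalgamating maps are injective
because `A_{lk v}` is a retract of `A_{Γ - v}`, and both factors are built from RAAGs of graphs
with fewer vertices. By the normal form theorem for amalgamated products, every element is
conjugate either into a factor or to a cyclically reduced word, and the powers of a nonempty
cyclically reduced word are again reduced words, hence nontrivial. So an element of finite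
order is conjugate into a factor, and induction on the number of vertices concludes.
-/

/-- The commutator relators of a right-angled Artin group: one commutator
`v * w * v⁻¹ * w⁻¹` for each edge `{v, w}` of `Γ`. -/
def raagRels {V : Type} (Γ : SimpleGraph V) : Set (FreeGroup V) :=
  {r | ∃ v w : V, Γ.Adj v w ∧
    r = FreeGroup.of v * FreeGroup.of w * (FreeGroup.of v)⁻¹ * (FreeGroup.of w)⁻¹}

/-- The right-angled Artin group of a (finite simple) graph `Γ`: the group presented
by the vertices of `Γ` with commutation relators for the edges. -/
abbrev RAAG {V : Type} (Γ : SimpleGraph V) : Type := PresentedGroup (raagRels Γ)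

-- Mathlib's `IsMulTorsionFree` asks for unique roots, which is stronger for non-abelian groups.
def Monoid.IsTorsionFree (G : Type*) [Monoid G] : Prop :=
  ∀ g : G, IsOfFinOrder g → g = 1

namespace Monoid.IsTorsionFree

variable {G K : Type*} [Monoid G] [Monoid K]

theorem of_injective (f : G →* K) (hf : Function.Injective f) (hK : IsTorsionFree K) :
    IsTorsionFree G :=
  fun _ hg => hf (by rw [hK _ (f.isOfFinOrder hg), map_one])

theorem prod (hG : IsTorsionFree G) (hK : IsTorsionFree K) : IsTorsionFree (G × K) :=
  fun _ hg => Prod.ext (hG _ hg.fst) (hK _ hg.snd)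

theorem of_isMulTorsionFree [IsMulTorsionFree G] : IsTorsionFree G := fun _ hg => by
  obtain ⟨n, hn, h⟩ := isOfFinOrder_iff_pow_eq_one.1 hg
  exact (pow_eq_one_iff_left hn.ne').1 h

end Monoid.IsTorsionFree

namespace Monoid.PushoutI

open CoprodI List

variable {ι : Type*} {G : ι → Type*} {H : Type*} [∀ i, Group (G i)] [Group H]
  {φ : ∀ i, H →* G i}

variable (φ) in
def listProd (l : List (Σ i, G i)) : PushoutI φ :=
  (l.map fun p => of p.1 p.2).prod

@[simp]
theorem listProd_nil : listProd φ [] = 1 := rfl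

@[simp]
theorem listProd_cons (p : Σ i, G i) (l : List (Σ i, G i)) :
    listProd φ (p :: l) = of p.1 p.2 * listProd φ l := by
  simp [listProd]

@[simp]
theorem listProd_append (l₁ l₂ : List (Σ i, G i)) :
    listProd φ (l₁ ++ l₂) = listProd φ l₁ * listProd φ l₂ := by
  simp [listProd]

theorem listProd_flatten_replicate (l : List (Σ i, G i)) (n : ℕ) :
    listProd φ (replicate n l).flatten = listProd φ l ^ n := by
  induction n with
  | zero => simp
  | succ n ih => rw [replicate_succ, flatten_cons, listProd_append, ih, pow_succ']

theorem ofCoprodI_word_prod (w : Word G) : ofCoprodI (φ := φ) w.prod = listProd φ w.toList := by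
  simp [Word.prod, listProd, map_list_prod, Function.comp_def]

variable (φ) in
structure IsReducedList (l : List (Σ i, G i)) : Prop where
  not_mem_range : ∀ p ∈ l, p.2 ∉ (φ p.1).range
  isChain : l.IsChain fun p q => p.1 ≠ q.1

variable (φ) in
structure IsCyclicallyReducedList (l : List (Σ i, G i)) : Prop extends IsReducedList φ l where
  fst_getLast_ne_fst_head : ∀ p ∈ l.getLast?, ∀ q ∈ l.head?, p.1 ≠ q.1

theorem isReducedList_append {l₁ l₂ : List (Σ i, G i)} :
    IsReducedList φ (l₁ ++ l₂) ↔ IsReducedList φ l₁ ∧ IsReducedList φ l₂ ∧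
      ∀ p ∈ l₁.getLast?, ∀ q ∈ l₂.head?, p.1 ≠ q.1 := by
  constructor
  · rintro ⟨hr, hc⟩
    obtain ⟨hc₁, hc₂, hc₁₂⟩ := isChain_append.1 hc
    exact ⟨⟨fun p hp => hr p (mem_append_left _ hp), hc₁⟩,
      ⟨fun p hp => hr p (mem_append_right _ hp), hc₂⟩, hc₁₂⟩
  · rintro ⟨h₁, h₂, h₁₂⟩
    refine ⟨fun p hp => ?_, h₁.isChain.append h₂.isChain h₁₂⟩
    rcases mem_append.1 hp with hp | hp
    exacts [h₁.not_mem_range p hp, h₂.not_mem_range p hp]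

theorem isReducedList_singleton {p : Σ i, G i} :
    IsReducedList φ [p] ↔ p.2 ∉ (φ p.1).range :=
  ⟨fun h => h.not_mem_range p (mem_singleton_self p),
    fun h => ⟨by simpa using h, isChain_singleton p⟩⟩

theorem IsReducedList.eq_nil_of_listProd_eq_one (hφ : ∀ i, Function.Injective (φ i))
    {l : List (Σ i, G i)} (hl : IsReducedList φ l) (h : listProd φ l = 1) : l = [] := by
  let w : Word G := ⟨l, fun p hp h1 => hl.not_mem_range p hp (h1 ▸ one_mem _), hl.isChain⟩
  have hw : Reduced φ w := hl.not_mem_range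
  have := hw.eq_empty_of_mem_range hφ (by rw [ofCoprodI_word_prod, h]; exact one_mem _)
  exact congrArg Word.toList this

theorem IsCyclicallyReducedList.isReducedList_flatten_replicate {l : List (Σ i, G i)}
    (hl : IsCyclicallyReducedList φ l) (n : ℕ) : IsReducedList φ (replicate n l).flatten := by
  rcases eq_or_ne l [] with rfl | hne
  · simpa using hl.toIsReducedList
  refine ⟨fun p hp => ?_, ?_⟩
  · obtain ⟨l', hl', hp⟩ := mem_flatten.1 hp
    exact hl.not_mem_range p ((eq_of_mem_replicate hl') ▸ hp)
  · refine (isChain_flatten (by simp [mem_replicate, hne.symm])).2 ⟨?_, ?_⟩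
    · intro l' hl'
      exact (eq_of_mem_replicate hl') ▸ hl.isChain
    · exact isChain_replicate_of_rel n hl.fst_getLast_ne_fst_head

theorem IsCyclicallyReducedList.eq_nil_of_pow_eq_one (hφ : ∀ i, Function.Injective (φ i))
    {l : List (Σ i, G i)} (hl : IsCyclicallyReducedList φ l) {n : ℕ} (hn : n ≠ 0)
    (h : listProd φ l ^ n = 1) : l = [] := by
  have := (hl.isReducedList_flatten_replicate n).eq_nil_of_listProd_eq_one hφ
    (by rw [listProd_flatten_replicate, h])
  simpa [hn] using this

-- Conjugating by the first letter merges it into the last one; if the merged letter lies in the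
-- base, it is absorbed into its left neighbour.
theorem IsReducedList.exists_shorter_isConj {i : ι} {a b : G i} {m : List (Σ i, G i)}
    (hl : IsReducedList φ (⟨i, a⟩ :: (m ++ [⟨i, b⟩]))) :
    ∃ l, IsReducedList φ l ∧ l.length < m.length + 2 ∧
      IsConj (listProd φ (⟨i, a⟩ :: (m ++ [⟨i, b⟩]))) (listProd φ l) := by
  have hm : m ≠ [] := by
    rintro rfl
    simpa using hl.isChain
  obtain ⟨-, hmb, -⟩ := (isReducedList_append (l₁ := [⟨i, a⟩])).1 hl
  obtain ⟨hm', -, hlast⟩ := isReducedList_append.1 hmb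
  have hconj : IsConj (listProd φ (⟨i, a⟩ :: (m ++ [⟨i, b⟩]))) (listProd φ m * of i (b * a)) :=
    isConj_iff.2 ⟨(of i a)⁻¹, by simp [mul_assoc]⟩
  by_cases hba : b * a ∈ (φ i).range
  · obtain ⟨h, hh⟩ := hba
    obtain ⟨m', ⟨k, r⟩, rfl⟩ := (eq_nil_or_concat' m).resolve_left hm
    obtain ⟨hm'', hr, hlast'⟩ := isReducedList_append.1 hm'
    refine ⟨m' ++ [⟨k, r * φ k h⟩], isReducedList_append.2 ⟨hm'', ?_, by simpa using hlast'⟩,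
      by simp, ?_⟩
    · rw [isReducedList_singleton] at hr ⊢
      rwa [mul_mem_cancel_right (⟨h, rfl⟩ : φ k h ∈ (φ k).range)]
    · convert hconj using 1
      simp [← hh, of_apply_eq_base, mul_assoc]
  · exact ⟨m ++ [⟨i, b * a⟩], isReducedList_append.2 ⟨hm', isReducedList_singleton.2 hba,
      by simpa using hlast⟩, by simp, by simpa using hconj⟩

theorem IsReducedList.isConj_of_or_cyclicallyReduced {l : List (Σ i, G i)}
    (hl : IsReducedList φ l) :
    (∃ i g, IsConj (listProd φ l) (of i g)) ∨
      ∃ l', IsCyclicallyReducedList φ l' ∧ IsConj (listProd φ l) (listProd φ l') := by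
  induction hlen : l.length using Nat.strong_induction_on generalizing l with | _ n ih
  rcases l with _ | ⟨⟨i, a⟩, rest⟩
  · exact Or.inr ⟨[], ⟨hl, by simp⟩, IsConj.refl _⟩
  rcases eq_nil_or_concat' rest with rfl | ⟨m, ⟨j, b⟩, rfl⟩
  · exact Or.inl ⟨i, a, by simpa using IsConj.refl (of (φ := φ) i a)⟩
  obtain rfl | hij := eq_or_ne j i
  · obtain ⟨l', hl', hlen', hconj⟩ := hl.exists_shorter_isConj
    have hlt : l'.length < n := by
      simp only [length_cons, length_append] at hlen
      omega
    rcases ih _ hlt hl' rfl with ⟨k, g, hc⟩ | ⟨l'', hl'', hc⟩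
    · exact Or.inl ⟨k, g, hconj.trans hc⟩
    · exact Or.inr ⟨l'', hl'', hconj.trans hc⟩
  · exact Or.inr ⟨_, ⟨hl, by simp [getLast?_cons, hij]⟩, IsConj.refl _⟩

theorem NormalWord.Transversal.eq_one_of_mem_range (d : NormalWord.Transversal φ) {i : ι}
    {g : G i} (hs : g ∈ d.set i) (hr : g ∈ (φ i).range) : g = 1 :=
  congrArg Subtype.val <|
    ((d.compl i).equiv_snd_eq_self_of_mem_of_one_mem (φ i).range.one_mem hs).symm.trans
      ((d.compl i).equiv_snd_eq_one_of_mem_of_one_mem (d.one_mem i) hr)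

theorem exists_eq_base_mul_listProd (hφ : ∀ i, Function.Injective (φ i)) (x : PushoutI φ) :
    ∃ h l, IsReducedList φ l ∧ x = base φ h * listProd φ l := by
  classical
  obtain ⟨d⟩ := NormalWord.transversal_nonempty φ hφ
  let w := NormalWord.equiv (d := d) x
  refine ⟨w.head, w.toList, ⟨fun p hp hr => w.ne_one p hp ?_, w.chain_ne⟩, ?_⟩
  · exact d.eq_one_of_mem_range (w.normalized p.1 p.2 hp) hr
  · rw [← ofCoprodI_word_prod]
    exact (NormalWord.equiv.symm_apply_apply x).symm

theorem isConj_of_or_cyclicallyReduced [Nonempty ι]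
    (hφ : ∀ i, Function.Injective (φ i)) (x : PushoutI φ) :
    (∃ i g, IsConj x (of i g)) ∨ ∃ l, IsCyclicallyReducedList φ l ∧ IsConj x (listProd φ l) := by
  obtain ⟨h, l, hl, rfl⟩ := exists_eq_base_mul_listProd hφ x
  rcases l with _ | ⟨⟨i, g⟩, l⟩
  · exact Or.inl ⟨Classical.arbitrary ι, φ _ h,
      by simpa [of_apply_eq_base] using IsConj.refl (base φ h)⟩
  have hl' : IsReducedList φ (⟨i, φ i h * g⟩ :: l) := by
    obtain ⟨hg, hl, hhead⟩ := (isReducedList_append (l₁ := [⟨i, g⟩])).1 hl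
    refine isReducedList_append.2 ⟨isReducedList_singleton.2 ?_, hl, by simpa using hhead⟩
    exact (mul_mem_cancel_left (⟨h, rfl⟩ : φ i h ∈ (φ i).range)).not.2
      (isReducedList_singleton.1 hg)
  have hprod : base φ h * listProd φ (⟨i, g⟩ :: l) = listProd φ (⟨i, φ i h * g⟩ :: l) := by
    simp [← of_apply_eq_base φ i h, mul_assoc]
  exact hprod ▸ hl'.isConj_of_or_cyclicallyReduced

theorem isTorsionFree [Nonempty ι] (hφ : ∀ i, Function.Injective (φ i))
    (hG : ∀ i, Monoid.IsTorsionFree (G i)) : Monoid.IsTorsionFree (PushoutI φ) := by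
  intro x hx
  rcases isConj_of_or_cyclicallyReduced hφ x with ⟨i, g, hc⟩ | ⟨l, hl, hc⟩
  · have hg : IsOfFinOrder g := (of_injective hφ i).isOfFinOrder_iff.1 (hc.isOfFinOrder hx)
    rwa [hG i g hg, map_one, isConj_one_left] at hc
  · obtain ⟨n, hn, hpow⟩ := isOfFinOrder_iff_pow_eq_one.1 (hc.isOfFinOrder hx)
    rwa [hl.eq_nil_of_pow_eq_one hφ hn.ne' hpow, listProd_nil, isConj_one_left] at hc

end Monoid.PushoutI

namespace RAAG

variable {V W : Type} {Γ : SimpleGraph V} {Δ : SimpleGraph W}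

theorem commute_of_adj {a b : V} (h : Γ.Adj a b) :
    Commute (PresentedGroup.of a : RAAG Γ) (PresentedGroup.of b) := by
  rw [← commutatorElement_eq_one_iff_commute, commutatorElement_def]
  simpa [PresentedGroup.of] using PresentedGroup.one_of_mem (rels := raagRels Γ) ⟨a, b, h, rfl⟩

def lift {K : Type*} [Group K] (f : V → K) (hf : ∀ a b, Γ.Adj a b → Commute (f a) (f b)) :
    RAAG Γ →* K :=
  PresentedGroup.toGroup (f := f) <| by
    rintro r ⟨a, b, hab, rfl⟩
    simpa [commutatorElement_def] using commutatorElement_eq_one_iff_commute.2 (hf a b hab)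

@[simp]
theorem lift_of {K : Type*} [Group K] (f : V → K) (hf : ∀ a b, Γ.Adj a b → Commute (f a) (f b))
    (v : V) : lift f hf (PresentedGroup.of v) = f v :=
  PresentedGroup.toGroup.of _

def map (f : Γ →g Δ) : RAAG Γ →* RAAG Δ :=
  lift (fun v => PresentedGroup.of (f v)) fun _ _ h => commute_of_adj (f.map_adj h)

@[simp]
theorem map_of (f : Γ →g Δ) (v : V) : map f (PresentedGroup.of v) = PresentedGroup.of (f v) :=
  lift_of _ _ v

theorem map_injective (f : Γ ↪g Δ) : Function.Injective (map f.toHom) := by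
  classical
  let r : RAAG Δ →* RAAG Γ :=
    lift (fun w => if h : ∃ v, f v = w then PresentedGroup.of h.choose else 1) <| by
      intro a b hab
      split_ifs with ha hb hb
      · exact commute_of_adj (f.map_adj_iff.1 (by rwa [ha.choose_spec, hb.choose_spec]))
      all_goals simp
  have hr : r.comp (map f.toHom) = MonoidHom.id _ :=
    PresentedGroup.ext fun v => by simp [r]
  exact Function.LeftInverse.injective (g := r) (DFunLike.congr_fun hr)

theorem commute_map_of (f : Δ →g Γ) {v : V} (hv : ∀ w, Γ.Adj (f w) v) (x : RAAG Δ) :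
    Commute (map f x) (PresentedGroup.of v) := by
  suffices x ∈ (Subgroup.centralizer {PresentedGroup.of v}).comap (map f) by
    simpa [Subgroup.mem_centralizer_singleton_iff, commute_iff_eq] using this
  refine PresentedGroup.generated_by _ _ (fun w => ?_) x
  simpa [Subgroup.mem_centralizer_singleton_iff, commute_iff_eq] using (commute_of_adj (hv w)).eq

section Amalgam

open Monoid.PushoutI

variable (Γ) (v : V)

-- `A_Γ ↪ A_{Γ - v} *_{A_{lk v}} (A_{lk v} × ⟨v⟩)`, with `Γ - v` at index `true`.
abbrev amalgamFactor : Bool → Type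
  | true => RAAG (Γ.induce {v}ᶜ)
  | false => RAAG (Γ.induce (Γ.neighborSet v)) × Multiplicative ℤ

instance : ∀ b, Group (amalgamFactor Γ v b)
  | true => inferInstanceAs (Group (RAAG _))
  | false => inferInstanceAs (Group (_ × _))

def linkToFactor : ∀ b, RAAG (Γ.induce (Γ.neighborSet v)) →* amalgamFactor Γ v b
  | true => map (Γ.induceHomOfLE (Γ.neighborSet_subset_compl v)).toHom
  | false => MonoidHom.inl _ _

theorem linkToFactor_injective : ∀ b, Function.Injective (linkToFactor Γ v b)
  | true => map_injective _
  | false => Prod.mk_left_injective 1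

theorem commute_map_neighborSet_zpowers (x : RAAG (Γ.induce (Γ.neighborSet v)))
    (n : Multiplicative ℤ) :
    Commute (map (SimpleGraph.Embedding.induce _).toHom x) (zpowersHom _ (PresentedGroup.of v) n) :=
  (commute_map_of _ (fun w => w.2.symm) x).zpow_right _

def factorToRAAG : ∀ b, amalgamFactor Γ v b →* RAAG Γ
  | true => map (SimpleGraph.Embedding.induce _).toHom
  | false => (map (SimpleGraph.Embedding.induce _).toHom).noncommCoprod
      (zpowersHom _ (PresentedGroup.of v)) (commute_map_neighborSet_zpowers Γ v)

theorem factorToRAAG_comp_linkToFactor :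
    ∀ b, (factorToRAAG Γ v b).comp (linkToFactor Γ v b) = map (SimpleGraph.Embedding.induce _).toHom
  | true => PresentedGroup.ext fun u => by
    rw [MonoidHom.comp_apply]
    simp only [factorToRAAG, linkToFactor, map_of]
    rfl
  | false => MonoidHom.noncommCoprod_comp_inl _ _ (commute_map_neighborSet_zpowers Γ v)

theorem of_true_eq_of_false {u : V} (hu : Γ.Adj v u) :
    of (φ := linkToFactor Γ v) true
        (PresentedGroup.of (⟨u, (Γ.ne_of_adj hu).symm⟩ : ({v}ᶜ : Set V))) =
      of false ((PresentedGroup.of ⟨u, hu⟩, 1) : amalgamFactor Γ v false) := by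
  have h₁ := of_apply_eq_base (linkToFactor Γ v) true (PresentedGroup.of ⟨u, hu⟩)
  have h₂ := of_apply_eq_base (linkToFactor Γ v) false (PresentedGroup.of ⟨u, hu⟩)
  exact h₁.trans h₂.symm

noncomputable def toAmalgam : RAAG Γ →* Monoid.PushoutI (linkToFactor Γ v) := by
  classical
  exact lift (fun u => if h : u = v then of false ((1, .ofAdd 1) : amalgamFactor Γ v false)
    else of true (PresentedGroup.of (⟨u, h⟩ : ({v}ᶜ : Set V)) : amalgamFactor Γ v true)) <| by
    have key : ∀ u (hu : Γ.Adj v u),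
        Commute (of (φ := linkToFactor Γ v) false ((1, .ofAdd 1) : amalgamFactor Γ v false))
        (of true (PresentedGroup.of (⟨u, (Γ.ne_of_adj hu).symm⟩ : ({v}ᶜ : Set V)) :
          amalgamFactor Γ v true)) := fun u hu => by
      rw [of_true_eq_of_false Γ v hu]
      exact (Commute.prod (Commute.one_left _) (Commute.one_right _)).map (of false)
    intro a b hab
    by_cases ha : a = v <;> by_cases hb : b = v
    · exact absurd hab (ha ▸ hb ▸ Γ.irrefl)
    · subst ha
      simpa [hb] using key b hab
    · subst hb
      simpa [ha] using (key a hab.symm).symm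
    · simpa [ha, hb] using
        (commute_of_adj (show (Γ.induce {v}ᶜ).Adj ⟨a, ha⟩ ⟨b, hb⟩ from hab)).map
          (of (φ := linkToFactor Γ v) true)

def ofAmalgam : Monoid.PushoutI (linkToFactor Γ v) →* RAAG Γ :=
  Monoid.PushoutI.lift (factorToRAAG Γ v) _ (factorToRAAG_comp_linkToFactor Γ v)

theorem toAmalgam_injective : Function.Injective (toAmalgam Γ v) := by
  have h : (ofAmalgam Γ v).comp (toAmalgam Γ v) = MonoidHom.id _ := by
    refine PresentedGroup.ext fun u => ?_
    by_cases hu : u = v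
    · subst hu
      simp [toAmalgam, ofAmalgam, factorToRAAG]
    · simp [toAmalgam, ofAmalgam, factorToRAAG, hu]
  exact Function.LeftInverse.injective (g := ofAmalgam Γ v) (DFunLike.congr_fun h)

end Amalgam

theorem isTorsionFree [Finite V] (Γ : SimpleGraph V) :
    Monoid.IsTorsionFree (RAAG Γ) := by
  induction hn : Nat.card V using Nat.strong_induction_on generalizing V with | _ n ih
  rcases isEmpty_or_nonempty V with hV | ⟨⟨v⟩⟩
  · intro g _
    obtain ⟨z, rfl⟩ := PresentedGroup.mk_surjective _ g
    rw [Subsingleton.elim z 1, map_one]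
  have ih' (s : Set V) (hs : v ∉ s) : Monoid.IsTorsionFree (RAAG (Γ.induce s)) :=
    ih _ (hn ▸ Finite.card_subtype_lt hs) _ rfl
  refine .of_injective _ (toAmalgam_injective Γ v)
    (Monoid.PushoutI.isTorsionFree (linkToFactor_injective Γ v) ?_)
  rintro (_ | _)
  · exact (ih' _ Γ.notMem_neighborSet_self).prod .of_isMulTorsionFree
  · exact ih' {v}ᶜ (by simp)

end RAAG

/-- Right-angled Artin groups are torsion-free: if `g ≠ 1` in `A_Γ`, then `g ^ k ≠ 1`
for every integer `k ≥ 1`. -/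
theorem raag_torsionFree {V : Type} [Fintype V] (Γ : SimpleGraph V)
    (g : RAAG Γ) (hg : g ≠ 1) (k : ℤ) (hk : 1 ≤ k) :
    g ^ k ≠ 1 := fun h =>
  hg (RAAG.isTorsionFree Γ g (isOfFinOrder_iff_zpow_eq_one.2 ⟨k, by omega, h⟩))
end
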